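/- Let β ≥ 1/√3 and x ∈ (β/(β+1), 1). Then k₂(x) = (β+1)x^{(β+1)/2} − β x^{(β+3)/2} − (β+1)x + β ≥ 0. -/

import Mathlib

/-!
Put `A = x ^ ((β + 1) / 2)`, so that `k₂(x) = A (β + 1 - β x) - ((β + 1) x - β)`.
Bernoulli's inequality bounds the subtracted term by `x ^ (β + 1) = A ²`, and
`A ≤ 1 ≤ β + 1 - β x` on `[0, 1]`, so `k₂(x) ≥ A (β + 1 - β x - A) ≥ 0`.
-/

namespace Real

variable {β x : ℝ}

lemma add_one_mul_sub_le_sq_rpow_half (hβ : 0 ≤ β) (hx : 0 ≤ x) :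
    (β + 1) * x - β ≤ (x ^ ((β + 1) / 2)) ^ 2 := by
  have hbern := one_add_mul_self_le_rpow_one_add (s := x - 1) (by linarith) (p := β + 1)
    (by linarith)
  rw [← rpow_natCast, ← rpow_mul hx]
  norm_num at hbern ⊢
  linarith

end Real

open Real in
lemma k2_nonneg_of_nonneg_of_le_one {β x : ℝ} (hβ : 0 ≤ β) (hx₀ : 0 ≤ x) (hx₁ : x ≤ 1) :
    0 ≤ (β + 1) * x ^ ((β + 1) / 2) - β * x ^ ((β + 3) / 2) - (β + 1) * x + β := by
  have hbern := add_one_mul_sub_le_sq_rpow_half hβ hx₀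
  have hsplit : x ^ ((β + 3) / 2) = x ^ ((β + 1) / 2) * x := by
    rw [← rpow_add_one' hx₀ (by positivity)]
    ring_nf
  set A := x ^ ((β + 1) / 2)
  have hA₀ : 0 ≤ A := rpow_nonneg hx₀ _
  have hA₁ : A ≤ 1 := rpow_le_one hx₀ hx₁ (by positivity)
  have hgap : 0 ≤ β + 1 - β * x - A := by nlinarith
  rw [hsplit]
  nlinarith [mul_nonneg hA₀ hgap]

theorem k2_nonneg (β x : ℝ) (hβ : 1 / Real.sqrt 3 ≤ β)
    (hx₁ : β / (β + 1) < x) (hx₂ : x < 1) :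
    0 ≤ (β + 1) * x ^ ((β + 1) / 2) - β * x ^ ((β + 3) / 2) - (β + 1) * x + β := by
  have hβ₀ : 0 ≤ β := (by positivity : (0 : ℝ) ≤ 1 / Real.sqrt 3).trans hβ
  have hx₀ : 0 ≤ x := (div_nonneg hβ₀ (by linarith)).trans hx₁.le
  exact k2_nonneg_of_nonneg_of_le_one hβ₀ hx₀ hx₂.le
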